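/- arXiv:1503.02436 — 3 statements merged into one kernel-verified Lean document; each statement's English description precedes it below -/
import Mathlib

section
/- Let O be a profinite group. Then every discrete Q[O]-module is both injective and projective in the abelian category of discrete Q[O]-modules. -/
universe u

/-- A discrete `ℚ[G]`-module over a topological group `G`: a `ℚ`-vector space with
a `ℚ`-linear `G`-action in which every element has open stabilizer. -/
structure DiscGMod (G : Type u) [Group G] [TopologicalSpace G] : Type (u + 1) where
  carrier : Type u
  [acg : AddCommGroup carrier]
  [mod : Module ℚ carrier]
  [act : DistribMulAction G carrier]
  [cmm : SMulCommClass G ℚ carrier]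
  discrete : ∀ m : carrier, IsOpen ((MulAction.stabilizer G m : Subgroup G) : Set G)

attribute [instance] DiscGMod.acg DiscGMod.mod DiscGMod.act DiscGMod.cmm

/-- A morphism of discrete `ℚ[G]`-modules is a `G`-equivariant `ℚ`-linear map. -/
def DiscGMod.Equivariant {G : Type u} [Group G] [TopologicalSpace G]
    {A B : DiscGMod G} (f : A.carrier →ₗ[ℚ] B.carrier) : Prop :=
  ∀ (g : G) (a : A.carrier), f (g • a) = g • f a

/-- `M` is injective in the category of discrete `ℚ[G]`-modules: morphisms into `M`
extend along monomorphisms. -/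
def DiscGMod.IsInjectiveObj {G : Type u} [Group G] [TopologicalSpace G]
    (M : DiscGMod G) : Prop :=
  ∀ (A B : DiscGMod G) (ι : A.carrier →ₗ[ℚ] B.carrier),
    DiscGMod.Equivariant ι → Function.Injective ι →
    ∀ φ : A.carrier →ₗ[ℚ] M.carrier, DiscGMod.Equivariant φ →
    ∃ ψ : B.carrier →ₗ[ℚ] M.carrier, DiscGMod.Equivariant ψ ∧ ψ.comp ι = φ

/-- `M` is projective in the category of discrete `ℚ[G]`-modules: morphisms out of
`M` lift along epimorphisms. -/
def DiscGMod.IsProjectiveObj {G : Type u} [Group G] [TopologicalSpace G]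
    (M : DiscGMod G) : Prop :=
  ∀ (A B : DiscGMod G) (π : B.carrier →ₗ[ℚ] A.carrier),
    DiscGMod.Equivariant π → Function.Surjective π →
    ∀ φ : M.carrier →ₗ[ℚ] A.carrier, DiscGMod.Equivariant φ →
    ∃ ψ : M.carrier →ₗ[ℚ] B.carrier, DiscGMod.Equivariant ψ ∧ π.comp ψ = φ

/-!
Over `ℚ` every equivariant injection has a linear retraction and every equivariant surjection a
linear section. Averaging such a splitting `f` over `O`, `b ↦ ∫ g • f (g⁻¹ • b) dg`, makes it
equivariant without changing its composite with the given map. On a discrete module this Haar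
integral is a finite average over the cosets of an open subgroup: orbits are finite because
stabilisers are open in the compact group `O`, and `ℚ` lets us divide by the index.
-/

open MulAction

section CosetAverage

variable {G Y : Type*} [Group G]

def ConstOnCosets (V : Subgroup G) (F : G → Y) : Prop :=
  ∀ g, ∀ v ∈ V, F (g * v) = F g

lemma ConstOnCosets.eq_of_mk_eq {V : Subgroup G} {F : G → Y} (hF : ConstOnCosets V F) {a b : G}
    (h : (a : G ⧸ V) = b) : F a = F b := by
  rw [← mul_inv_cancel_left a b, hF a _ (QuotientGroup.eq.mp h)]

lemma ConstOnCosets.mono {V W : Subgroup G} {F : G → Y} (hWV : W ≤ V) (hF : ConstOnCosets V F) :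
    ConstOnCosets W F :=
  fun g v hv => hF g v (hWV hv)

lemma ConstOnCosets.comp_mul_left {V : Subgroup G} {F : G → Y} (hF : ConstOnCosets V F) (h : G) :
    ConstOnCosets V fun g => F (h * g) :=
  fun g v hv => by simp only [← mul_assoc, hF _ v hv]

variable [AddCommGroup Y] [Module ℚ Y] {V : Subgroup G}

noncomputable def cosetAverage (V : Subgroup G) (F : G → Y) : Y :=
  (V.index : ℚ)⁻¹ • ∑ᶠ q : G ⧸ V, F q.out

lemma cosetAverage_comp_mul_left {F : G → Y} (hF : ConstOnCosets V F) (h : G) :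
    cosetAverage V (fun g => F (h * g)) = cosetAverage V F := by
  have hmk : ∀ q : G ⧸ V, F (h * q.out) = F (h • q).out := fun q =>
    hF.eq_of_mk_eq (by
      rw [QuotientGroup.out_eq']; exact congrArg (h • ·) (QuotientGroup.out_eq' q))
  rw [cosetAverage, cosetAverage, finsum_congr hmk]
  exact congrArg _ (finsum_comp_equiv (MulAction.toPerm h) (f := fun q : G ⧸ V => F q.out))

variable [Finite (G ⧸ V)]

lemma cosetAverage_add (F F' : G → Y) :
    cosetAverage V (F + F') = cosetAverage V F + cosetAverage V F' := by
  rw [cosetAverage, cosetAverage, cosetAverage, ← smul_add,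
    ← finsum_add_distrib (Set.toFinite _) (Set.toFinite _)]
  rfl

lemma map_cosetAverage {Z : Type*} [AddCommGroup Z] [Module ℚ Z] (p : Y →ₗ[ℚ] Z) (F : G → Y) :
    p (cosetAverage V F) = cosetAverage V (p ∘ F) := by
  rw [cosetAverage, cosetAverage, map_smul, map_finsum p (Set.toFinite _)]
  rfl

lemma cosetAverage_const (c : Y) : cosetAverage V (fun _ => c) = c := by
  have : Fintype (G ⧸ V) := Fintype.ofFinite _
  have hV : (V.index : ℚ) ≠ 0 := Nat.cast_ne_zero.mpr V.index_ne_zero_of_finite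
  rw [cosetAverage, finsum_eq_sum_of_fintype, Finset.sum_const, Finset.card_univ,
    ← Nat.card_eq_fintype_card, ← Subgroup.index_eq_card, ← Nat.cast_smul_eq_nsmul ℚ, smul_smul,
    inv_mul_cancel₀ hV, one_smul]

lemma cosetAverage_of_le {W : Subgroup G} [Finite (G ⧸ W)] (hWV : W ≤ V) {F : G → Y}
    (hF : ConstOnCosets V F) : cosetAverage W F = cosetAverage V F := by
  let e := Subgroup.quotientEquivProdOfLE hWV
  have : Finite (V ⧸ W.subgroupOf V) := by
    have := Finite.of_equiv _ e
    exact Finite.prod_right (G ⧸ V)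
  have : Fintype (G ⧸ V) := Fintype.ofFinite _
  have : Fintype (G ⧸ W) := Fintype.ofFinite _
  have : Fintype (V ⧸ W.subgroupOf V) := Fintype.ofFinite _
  set r := Nat.card (V ⧸ W.subgroupOf V)
  have hr : (r : ℚ) ≠ 0 := Nat.cast_ne_zero.mpr Nat.card_pos.ne'
  have hindex : W.index = V.index * r := by
    rw [Subgroup.index_eq_card, Subgroup.index_eq_card, Nat.card_congr e, Nat.card_prod]
  have hout : ∀ q : G ⧸ W, F q.out = F (e q).1.out := fun q =>
    hF.eq_of_mk_eq (by
      rw [QuotientGroup.out_eq']; conv_rhs => rw [← QuotientGroup.out_eq' q]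
      rfl)
  have hsum : ∑ q : G ⧸ W, F q.out = r • ∑ p : G ⧸ V, F p.out := by
    rw [Fintype.sum_congr _ _ hout, e.sum_comp (fun x => F x.1.out), Fintype.sum_prod_type]
    simp only [Finset.sum_const, Finset.card_univ, ← Nat.card_eq_fintype_card, Finset.smul_sum, r]
  rw [cosetAverage, cosetAverage, finsum_eq_sum_of_fintype, finsum_eq_sum_of_fintype, hsum,
    ← Nat.cast_smul_eq_nsmul ℚ, smul_smul, hindex, Nat.cast_mul, mul_inv, mul_assoc,
    inv_mul_cancel₀ hr, mul_one]

end CosetAverage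

section HaarAverage

variable {G Y : Type*} [Group G] [TopologicalSpace G] [SeparatelyContinuousMul G] [CompactSpace G]
  [AddCommGroup Y] [Module ℚ Y] {F F' : G → Y}

open Classical in
/-- The normalised Haar integral of a function constant on the cosets of some open subgroup;
junk value `0` for other functions. -/
noncomputable def haarAverage (F : G → Y) : Y :=
  if h : ∃ V : OpenSubgroup G, ConstOnCosets (V : Subgroup G) F then
    cosetAverage (h.choose : Subgroup G) F
  else 0

lemma haarAverage_eq_cosetAverage (V : OpenSubgroup G) (hF : ConstOnCosets (V : Subgroup G) F) :
    haarAverage F = cosetAverage (V : Subgroup G) F := by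
  have h : ∃ V : OpenSubgroup G, ConstOnCosets (V : Subgroup G) F := ⟨V, hF⟩
  let W : OpenSubgroup G := h.choose ⊓ V
  rw [haarAverage, dif_pos h, ← cosetAverage_of_le (W := W) inf_le_left h.choose_spec,
    cosetAverage_of_le (W := W) inf_le_right hF]

lemma haarAverage_add {V V' : OpenSubgroup G} (hF : ConstOnCosets (V : Subgroup G) F)
    (hF' : ConstOnCosets (V' : Subgroup G) F') :
    haarAverage (F + F') = haarAverage F + haarAverage F' := by
  have hFW : ConstOnCosets ((V ⊓ V' : OpenSubgroup G) : Subgroup G) F := hF.mono inf_le_left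
  have hF'W : ConstOnCosets ((V ⊓ V' : OpenSubgroup G) : Subgroup G) F' := hF'.mono inf_le_right
  rw [haarAverage_eq_cosetAverage _ hFW, haarAverage_eq_cosetAverage _ hF'W,
    haarAverage_eq_cosetAverage _ fun g v hv => by simp only [Pi.add_apply, hFW g v hv, hF'W g v hv],
    cosetAverage_add]

lemma map_haarAverage {Z : Type*} [AddCommGroup Z] [Module ℚ Z] (p : Y →ₗ[ℚ] Z) {V : OpenSubgroup G}
    (hF : ConstOnCosets (V : Subgroup G) F) : p (haarAverage F) = haarAverage (p ∘ F) := by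
  rw [haarAverage_eq_cosetAverage V hF, map_cosetAverage,
    haarAverage_eq_cosetAverage V fun g v hv => congrArg p (hF g v hv)]

lemma haarAverage_comp_mul_left {V : OpenSubgroup G} (hF : ConstOnCosets (V : Subgroup G) F)
    (h : G) : haarAverage (fun g => F (h * g)) = haarAverage F := by
  rw [haarAverage_eq_cosetAverage V hF, haarAverage_eq_cosetAverage V (hF.comp_mul_left h),
    cosetAverage_comp_mul_left hF]

lemma haarAverage_const (c : Y) : haarAverage (fun _ : G => c) = c := by
  rw [haarAverage_eq_cosetAverage ⊤ fun _ _ _ => rfl, cosetAverage_const]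

end HaarAverage

namespace DiscGMod

variable {G : Type u} [Group G] [TopologicalSpace G] [SeparatelyContinuousMul G] [CompactSpace G]
  {X Y Z : DiscGMod G}

lemma finite_orbit (b : X.carrier) : (orbit G b).Finite := by
  have := Subgroup.quotient_finite_of_isOpen _ (X.discrete b)
  exact Set.finite_coe_iff.mp (Finite.of_equiv _ (orbitEquivQuotientStabilizer G b).symm)

lemma exists_constOnCosets (f : X.carrier →ₗ[ℚ] Y.carrier) (b : X.carrier) :
    ∃ V : OpenSubgroup G, ConstOnCosets (V : Subgroup G) fun g => g • f (g⁻¹ • b) := by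
  let K : Subgroup G := ⨅ x ∈ orbit G b, stabilizer G x ⊓ stabilizer G (f x)
  have hK : IsOpen (K : Set G) := by
    simp only [K, Subgroup.coe_iInf, Subgroup.coe_inf]
    exact (finite_orbit b).isOpen_biInter fun x _ => (X.discrete x).inter (Y.discrete (f x))
  refine ⟨⟨K, hK⟩, fun g v hv => ?_⟩
  have hv' : v ∈ stabilizer G (g⁻¹ • b) ⊓ stabilizer G (f (g⁻¹ • b)) :=
    Subgroup.mem_iInf.mp (Subgroup.mem_iInf.mp hv (g⁻¹ • b)) (mem_orbit b g⁻¹)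
  obtain ⟨hvb, hvf⟩ := Subgroup.mem_inf.mp hv'
  show (g * v) • f ((g * v)⁻¹ • b) = g • f (g⁻¹ • b)
  rw [mul_inv_rev, mul_smul v⁻¹, inv_smul_eq_iff.mpr (mem_stabilizer_iff.mp hvb).symm, mul_smul,
    mem_stabilizer_iff.mp hvf]

noncomputable def average (f : X.carrier →ₗ[ℚ] Y.carrier) : X.carrier →ₗ[ℚ] Y.carrier where
  toFun b := haarAverage fun g : G => g • f (g⁻¹ • b)
  map_add' b b' := by
    obtain ⟨V, hV⟩ := exists_constOnCosets f b
    obtain ⟨V', hV'⟩ := exists_constOnCosets f b'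
    rw [← haarAverage_add hV hV']
    simp only [smul_add, map_add]
    rfl
  map_smul' c b := by
    obtain ⟨V, hV⟩ := exists_constOnCosets f b
    have hc := map_haarAverage (LinearMap.lsmul ℚ Y.carrier c) hV
    simp only [LinearMap.lsmul_apply, Function.comp_def] at hc
    rw [RingHom.id_apply, hc]
    congr 1
    funext g
    rw [smul_comm g⁻¹ c, map_smul, smul_comm g c]

lemma average_apply (f : X.carrier →ₗ[ℚ] Y.carrier) (b : X.carrier) :
    average f b = haarAverage fun g : G => g • f (g⁻¹ • b) :=
  rfl

lemma equivariant_average (f : X.carrier →ₗ[ℚ] Y.carrier) : Equivariant (average f) := by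
  intro h b
  obtain ⟨V, hV⟩ := exists_constOnCosets f b
  calc average f (h • b)
      = haarAverage fun g => h • ((h⁻¹ * g) • f ((h⁻¹ * g)⁻¹ • b)) := by
        simp only [average_apply, smul_smul, mul_inv_cancel_left, mul_inv_rev, inv_inv]
    _ = h • haarAverage fun g => (h⁻¹ * g) • f ((h⁻¹ * g)⁻¹ • b) :=
        (map_haarAverage (DistribSMul.toLinearMap ℚ Y.carrier h) (hV.comp_mul_left h⁻¹)).symm
    _ = h • average f b := by rw [haarAverage_comp_mul_left hV, average_apply]

lemma average_eq_self {f : X.carrier →ₗ[ℚ] Y.carrier} (hf : Equivariant f) : average f = f := by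
  ext b
  simp only [average_apply, hf _ _, smul_inv_smul, haarAverage_const]

lemma average_comp (f : Y.carrier →ₗ[ℚ] Z.carrier) {ι : X.carrier →ₗ[ℚ] Y.carrier}
    (hι : Equivariant ι) : average (f ∘ₗ ι) = average f ∘ₗ ι := by
  ext a
  simp only [average_apply, LinearMap.comp_apply, hι _ _]

lemma comp_average (f : X.carrier →ₗ[ℚ] Y.carrier) {p : Y.carrier →ₗ[ℚ] Z.carrier}
    (hp : Equivariant p) : average (p ∘ₗ f) = p ∘ₗ average f := by
  ext b
  obtain ⟨V, hV⟩ := exists_constOnCosets f b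
  rw [LinearMap.comp_apply, average_apply, average_apply, map_haarAverage p hV]
  simp only [LinearMap.comp_apply, Function.comp_def, hp _ _]

end DiscGMod

theorem profinite_discrete_modules_inj_proj_general (O : Type u) [Group O]
    [TopologicalSpace O] [IsTopologicalGroup O] [CompactSpace O] (M : DiscGMod O) :
    M.IsInjectiveObj ∧ M.IsProjectiveObj := by
  refine ⟨fun A B ι hι hinj φ hφ => ?_, fun A B π hπ hsurj φ hφ => ?_⟩
  · obtain ⟨r, hr⟩ := ι.exists_leftInverse_of_injective (LinearMap.ker_eq_bot.mpr hinj)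
    refine ⟨DiscGMod.average (φ ∘ₗ r), DiscGMod.equivariant_average _, ?_⟩
    rw [← DiscGMod.average_comp _ hι, LinearMap.comp_assoc, hr, LinearMap.comp_id,
      DiscGMod.average_eq_self hφ]
  · obtain ⟨s, hs⟩ := π.exists_rightInverse_of_surjective (LinearMap.range_eq_top.mpr hsurj)
    refine ⟨DiscGMod.average (s ∘ₗ φ), DiscGMod.equivariant_average _, ?_⟩
    rw [← DiscGMod.comp_average _ hπ, ← LinearMap.comp_assoc, hs, LinearMap.id_comp,
      DiscGMod.average_eq_self hφ]

/-- Let `O` be a profinite group.  Every discrete `ℚ[O]`-module is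
both injective and projective in the category of discrete `ℚ[O]`-modules. -/
theorem profinite_discrete_modules_inj_proj (O : Type u) [Group O]
    [TopologicalSpace O] [IsTopologicalGroup O] [CompactSpace O]
    [TotallyDisconnectedSpace O] [T2Space O] (M : DiscGMod O) :
    M.IsInjectiveObj ∧ M.IsProjectiveObj :=
  profinite_discrete_modules_inj_proj_general O M
end

section
/- Let O be a profinite group and M a discrete Q[O]-module. Then the canonical map φ : M^O → M_O from the invariants to the coinvariants, sending m to 1 ⊗ m, is an isomorphism of Q-vector spaces, where M_O = Q ⊗_{Q[O]} M. -/
/-!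
In characteristic zero one can average over the cosets of a finite-index subgroup `H`, and every
element `m` of a discrete module has a finite-index stabilizer (open in a compact group). Averaging
`m` over the cosets of its stabilizer gives an invariant element congruent to `m` modulo the span of
the `g • m' - m'`, which is surjectivity. Each element of that span lies in the span of finitely
many `g • m' - m'` whose `m'` are all fixed by a single normal subgroup `H` of finite index;
averaging over `O ⧸ H` kills these generators and fixes invariant elements, which is injectivity.
-/

section

open MulAction Submodule

variable {k O M : Type*} [Group O] [AddCommGroup M] [DistribMulAction O M]

theorem smul_eq_smul_of_mk_eq {H : Subgroup O} {m : M} (hH : H ≤ stabilizer O m) {a b : O}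
    (h : (a : O ⧸ H) = b) : a • m = b • m := by
  have hab : (a⁻¹ * b) • m = m := hH (QuotientGroup.eq.mp h)
  simpa [smul_smul] using (congrArg (a • ·) hab).symm

section Span

variable [Semiring k] [Module k M]

variable (k O M) in
def coinvariantsKer : Submodule k M :=
  span k {x | ∃ (g : O) (m : M), x = g • m - m}

variable (k M) in
def coinvariantsKerOfFixed (H : Subgroup O) : Submodule k M :=
  span k {x | ∃ (g : O) (m : M), H ≤ stabilizer O m ∧ x = g • m - m}

theorem coinvariantsKerOfFixed_antitone : Antitone (coinvariantsKerOfFixed k M (O := O)) :=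
  fun _ _ hKH => span_mono fun _ ⟨g, m, hH, hx⟩ => ⟨g, m, hKH.trans hH, hx⟩

theorem exists_normal_finiteIndex_mem_coinvariantsKerOfFixed
    (hfin : ∀ m : M, (stabilizer O m).FiniteIndex) {x : M} (hx : x ∈ coinvariantsKer k O M) :
    ∃ H : Subgroup O, H.Normal ∧ H.FiniteIndex ∧ x ∈ coinvariantsKerOfFixed k M H := by
  induction hx using span_induction with
  | mem _ hx =>
    obtain ⟨g, m, rfl⟩ := hx
    exact ⟨(stabilizer O m).normalCore, inferInstance, inferInstance,
      subset_span ⟨g, m, Subgroup.normalCore_le _, rfl⟩⟩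
  | zero => exact ⟨⊤, inferInstance, inferInstance, zero_mem _⟩
  | add _ _ _ _ hx hy =>
    obtain ⟨H, _, _, hxH⟩ := hx
    obtain ⟨K, _, _, hyK⟩ := hy
    exact ⟨H ⊓ K, inferInstance, inferInstance,
      add_mem (coinvariantsKerOfFixed_antitone inf_le_left hxH)
        (coinvariantsKerOfFixed_antitone inf_le_right hyK)⟩
  | smul c _ _ hx =>
    obtain ⟨H, hHn, hHf, hxH⟩ := hx
    exact ⟨H, hHn, hHf, smul_mem _ c hxH⟩

end Span

variable [Field k] [Module k M]

theorem inv_natCast_smul_nsmul [CharZero k] {n : ℕ} (hn : n ≠ 0) (m : M) :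
    (n : k)⁻¹ • (n • m) = m := by
  rw [← Nat.cast_smul_eq_nsmul k, inv_smul_smul₀ (Nat.cast_ne_zero.mpr hn)]

variable [SMulCommClass O k M]

section Average

variable (k) in
noncomputable def average (H : Subgroup O) [Fintype (O ⧸ H)] : M →ₗ[k] M where
  toFun m := (Fintype.card (O ⧸ H) : k)⁻¹ • ∑ q : O ⧸ H, q.out • m
  map_add' m n := by simp only [smul_add, Finset.sum_add_distrib]
  map_smul' c m := by simp only [smul_comm _ c, ← Finset.smul_sum, RingHom.id_apply]

variable (H : Subgroup O) [Fintype (O ⧸ H)] {m : M}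

theorem average_apply (m : M) :
    average k H m = (Fintype.card (O ⧸ H) : k)⁻¹ • ∑ q : O ⧸ H, q.out • m :=
  rfl

theorem smul_average (hH : H ≤ stabilizer O m) (g : O) :
    g • average k H m = average k H m := by
  rw [average_apply, smul_comm g, Finset.smul_sum]
  congr 1
  calc ∑ q : O ⧸ H, g • q.out • m
      = ∑ q : O ⧸ H, (g • q).out • m := by
        refine Finset.sum_congr rfl fun q _ => ?_
        rw [smul_smul]
        exact smul_eq_smul_of_mk_eq hH (by
          rw [QuotientGroup.out_eq']; exact MulAction.Quotient.coe_smul_out H g q)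
    _ = ∑ q : O ⧸ H, q.out • m := Equiv.sum_comp (toPerm g) (fun q : O ⧸ H => q.out • m)

/-- Normality of `H` makes right multiplication by `g` a permutation of `O ⧸ H`. -/
theorem average_smul_sub_self [H.Normal] (hH : H ≤ stabilizer O m) (g : O) :
    average k H (g • m - m) = 0 := by
  rw [map_sub, sub_eq_zero, average_apply, average_apply]
  congr 1
  calc ∑ q : O ⧸ H, q.out • g • m
      = ∑ q : O ⧸ H, (q * (g : O ⧸ H)).out • m := by
        refine Finset.sum_congr rfl fun q _ => ?_
        rw [smul_smul]
        exact smul_eq_smul_of_mk_eq hH (by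
          rw [QuotientGroup.out_eq', QuotientGroup.mk_mul, QuotientGroup.out_eq'])
    _ = ∑ q : O ⧸ H, q.out • m :=
        Equiv.sum_comp (Equiv.mulRight (g : O ⧸ H)) (fun q : O ⧸ H => q.out • m)

theorem coinvariantsKerOfFixed_le_ker_average [H.Normal] :
    coinvariantsKerOfFixed k M H ≤ LinearMap.ker (average k H) :=
  span_le.mpr fun _ ⟨g, _, hH, hx⟩ => hx ▸ average_smul_sub_self H hH g

variable [CharZero k]

theorem average_eq_self_of_forall_smul_eq (hm : ∀ g : O, g • m = m) : average k H m = m := by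
  simp only [average_apply, hm, Finset.sum_const, Finset.card_univ,
    inv_natCast_smul_nsmul Fintype.card_ne_zero]

theorem average_sub_self_mem_coinvariantsKer (m : M) :
    average k H m - m ∈ coinvariantsKer k O M := by
  have hsum : average k H m - m =
      (Fintype.card (O ⧸ H) : k)⁻¹ • ∑ q : O ⧸ H, (q.out • m - m) := by
    rw [Finset.sum_sub_distrib, smul_sub, average_apply, Finset.sum_const, Finset.card_univ,
      inv_natCast_smul_nsmul Fintype.card_ne_zero]
  rw [hsum]
  exact smul_mem _ _ (sum_mem fun q _ => subset_span ⟨q.out, m, rfl⟩)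

theorem eq_zero_of_mem_coinvariantsKerOfFixed [H.Normal] (hm : ∀ g : O, g • m = m)
    (hmem : m ∈ coinvariantsKerOfFixed k M H) : m = 0 := by
  rw [← average_eq_self_of_forall_smul_eq (k := k) H hm]
  exact coinvariantsKerOfFixed_le_ker_average H hmem

end Average

theorem bijective_mk_invariants_of_finiteIndex_stabilizer [CharZero k]
    (hfin : ∀ m : M, (stabilizer O m).FiniteIndex) :
    Function.Bijective (fun m : {m : M // ∀ g : O, g • m = m} =>
      (Submodule.Quotient.mk m.1 : M ⧸ coinvariantsKer k O M)) := by
  constructor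
  · rintro ⟨m₁, h₁⟩ ⟨m₂, h₂⟩ h
    obtain ⟨H, _, _, hH⟩ :=
      exists_normal_finiteIndex_mem_coinvariantsKerOfFixed hfin ((Submodule.Quotient.eq _).mp h)
    have := Fintype.ofFinite (O ⧸ H)
    have hinv (g : O) : g • (m₁ - m₂) = m₁ - m₂ := by rw [smul_sub, h₁ g, h₂ g]
    exact Subtype.ext (sub_eq_zero.mp (eq_zero_of_mem_coinvariantsKerOfFixed H hinv hH))
  · intro y
    obtain ⟨m, rfl⟩ := Submodule.Quotient.mk_surjective _ y
    have := Fintype.ofFinite (O ⧸ stabilizer O m)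
    exact ⟨⟨average k (stabilizer O m) m, smul_average _ le_rfl⟩,
      (Submodule.Quotient.eq _).mpr (average_sub_self_mem_coinvariantsKer _ m)⟩

end

theorem invariants_equiv_coinvariants_general (O : Type*) [Group O] [TopologicalSpace O]
    [IsTopologicalGroup O] [CompactSpace O]
    (M : Type*) [AddCommGroup M] [Module ℚ M] [DistribMulAction O M]
    [SMulCommClass O ℚ M]
    (hdisc : ∀ m : M, IsOpen ((MulAction.stabilizer O m : Subgroup O) : Set O)) :
    Function.Bijective
      (fun m : {m : M // ∀ g : O, g • m = m} =>
        (Submodule.Quotient.mk m.1 :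
          M ⧸ Submodule.span ℚ {x : M | ∃ (g : O) (m' : M), x = g • m' - m'})) :=
  bijective_mk_invariants_of_finiteIndex_stabilizer fun m =>
    have := (MulAction.stabilizer O m).quotient_finite_of_isOpen (hdisc m)
    Subgroup.finiteIndex_of_finite_quotient

/-- Let `O` be a profinite group and `M` a discrete `ℚ[O]`-module.
The canonical map `M^O → M_O` from invariants to coinvariants, `m ↦ 1 ⊗ m`, is an
isomorphism of `ℚ`-vector spaces (i.e. it is bijective). -/
theorem invariants_equiv_coinvariants (O : Type*) [Group O] [TopologicalSpace O]
    [IsTopologicalGroup O] [CompactSpace O] [TotallyDisconnectedSpace O] [T2Space O]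
    (M : Type*) [AddCommGroup M] [Module ℚ M] [DistribMulAction O M]
    [SMulCommClass O ℚ M]
    (hdisc : ∀ m : M, IsOpen ((MulAction.stabilizer O m : Subgroup O) : Set O)) :
    Function.Bijective
      (fun m : {m : M // ∀ g : O, g • m = m} =>
        (Submodule.Quotient.mk m.1 :
          M ⧸ Submodule.span ℚ {x : M | ∃ (g : O) (m' : M), x = g • m' - m'})) :=
  invariants_equiv_coinvariants_general O M hdisc
end

section
/- A t.d.l.c. group G is compactly generated if and only if for some (equivalently, every) compact open subgroup O of G, the augmentation ideal ker(ε : Q[G/O] → Q) is a finitely generated discrete Q[G]-module; equivalently, G is of type FP₁ over Q. -/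
universe u

variable (G : Type u) [Group G] [TopologicalSpace G]

/-- `G` is compactly generated. -/
def CompactlyGenerated' : Prop :=
  ∃ K : Set G, IsCompact K ∧ Subgroup.closure K = ⊤

/-- The augmentation `ε : ℚ[G/O] → ℚ`. -/
noncomputable def augmentation (O : Subgroup G) : ((G ⧸ O) →₀ ℚ) →ₗ[ℚ] ℚ :=
  Finsupp.linearCombination ℚ (fun _ : G ⧸ O => (1 : ℚ))

/-- The kernel of the augmentation `ℚ[G/O] → ℚ` is a finitely generated discrete
`ℚ[G]`-module: finitely many elements of the kernel generate it over `ℚ[G]`,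
i.e. the `ℚ`-span of their `G`-translates is the whole kernel. -/
noncomputable def AugKerFG (O : Subgroup G) : Prop :=
  ∃ s : Finset ((G ⧸ O) →₀ ℚ), (∀ v ∈ s, v ∈ LinearMap.ker (augmentation G O)) ∧
    Submodule.span ℚ
        {x : (G ⧸ O) →₀ ℚ | ∃ (g : G), ∃ v ∈ s,
          x = Finsupp.mapDomain (fun y : G ⧸ O => g • y) v} =
      LinearMap.ker (augmentation G O)

/-- `G` is of type `FP₁` over `ℚ`: the trivial discrete `ℚ[G]`-module `ℚ` admits a
partial projective resolution `P₁ → P₀ → ℚ → 0` by finitely generated projective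
discrete `ℚ[G]`-modules; equivalently, by finite coproducts of permutation modules
`ℚ[G/O]` with `O` compact open. -/
noncomputable def IsTypeFPOne : Prop :=
  ∃ (n m : ℕ) (A : Fin n → Subgroup G) (B : Fin m → Subgroup G),
    (∀ i, IsOpen ((A i : Set G)) ∧ IsCompact ((A i : Set G))) ∧
    (∀ j, IsOpen ((B j : Set G)) ∧ IsCompact ((B j : Set G))) ∧
    ∃ (d : ((Σ j, G ⧸ B j) →₀ ℚ) →ₗ[ℚ] ((Σ i, G ⧸ A i) →₀ ℚ))
      (e : ((Σ i, G ⧸ A i) →₀ ℚ) →ₗ[ℚ] ℚ),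
      (∀ (g : G) (f : (Σ j, G ⧸ B j) →₀ ℚ),
        d (Finsupp.mapDomain (fun x : Σ j, G ⧸ B j =>
            (⟨x.1, g • x.2⟩ : Σ j, G ⧸ B j)) f) =
          Finsupp.mapDomain (fun x : Σ i, G ⧸ A i =>
            (⟨x.1, g • x.2⟩ : Σ i, G ⧸ A i)) (d f)) ∧
      (∀ (g : G) (f : (Σ i, G ⧸ A i) →₀ ℚ),
        e (Finsupp.mapDomain (fun x : Σ i, G ⧸ A i =>
            (⟨x.1, g • x.2⟩ : Σ i, G ⧸ A i)) f) = e f) ∧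
      Function.Surjective e ∧ LinearMap.range d = LinearMap.ker e

/-!
If `G = ⟨K⟩` with `K` compact, then `K` lies in finitely many cosets `aO`, and since
`g ↦ δ_{gO} - δ_O` is a cocycle, the vectors `δ_{aO} - δ_O` generate the augmentation ideal of
`ℚ[G/O]`. Conversely, finitely many generators are supported on `H/O` for the subgroup `H`
generated by `O` and finitely many coset representatives; pushing forward to `ℚ[G/H]` kills
everything they generate, in particular every `δ_{gO} - δ_O`, so `gH = H` for all `g`.

For `FP₁`, averaging over the finitely many cosets of an open subgroup in a compact one (this is
where characteristic zero enters) produces equivariant maps in both directions between `ℚ[G/O]`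
and any finitely generated permutation module `P₀ ↠ ℚ`, compatible with the augmentations; such
maps carry finite generation of the kernel from either module to the other.
-/

open Finsupp

open Pointwise in
theorem exists_isOpen_isCompact_subgroup (G : Type*) [Group G] [TopologicalSpace G]
    [IsTopologicalGroup G] [TotallyDisconnectedSpace G] [LocallyCompactSpace G] :
    ∃ O : Subgroup G, IsOpen (O : Set G) ∧ IsCompact (O : Set G) := by
  obtain ⟨K, hK, hK1⟩ := exists_compact_mem_nhds (1 : G)
  obtain ⟨W, ⟨hWc, hWo⟩, h1W, hWK⟩ :=
    loc_compact_Haus_tot_disc_of_zero_dim.mem_nhds_iff.1 (interior_mem_nhds.2 hK1)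
  have hW : IsCompact W := hK.of_isClosed_subset hWc (hWK.trans interior_subset)
  obtain ⟨U, hU, hUW⟩ := compact_open_separated_mul_left hW hWo le_rfl
  have hUW' : ∀ g ∈ U, g • W ⊆ W := by
    rintro g hg _ ⟨w, hw, rfl⟩
    exact hUW (Set.mul_mem_mul hg hw)
  set O := MulAction.stabilizer G W
  have hUO : U ∩ U⁻¹ ⊆ O := fun g hg =>
    (hUW' g hg.1).antisymm (Set.subset_smul_set_iff.2 (hUW' _ hg.2))
  have hOo : IsOpen (O : Set G) :=
    O.isOpen_of_mem_nhds (Filter.mem_of_superset (Filter.inter_mem hU (inv_mem_nhds_one G hU)) hUO)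
  have hOW : (O : Set G) ⊆ W := fun g hg => by
    simpa [MulAction.mem_stabilizer_iff.1 hg] using Set.smul_mem_smul_set (a := g) h1W
  exact ⟨O, hOo, hW.of_isClosed_subset (O.isClosed_of_isOpen hOo) hOW⟩

namespace Representation

variable {k G V W : Type*} [CommRing k] [Group G] [AddCommGroup V] [Module k V]
  [AddCommGroup W] [Module k W] (ρ : Representation k G V)

/-- The `k[G]`-submodule generated by `s`. -/
def orbitSpan (s : Set V) : Submodule k V :=
  Submodule.span k {x | ∃ g : G, ∃ v ∈ s, x = ρ g v}

variable {ρ}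

theorem subset_orbitSpan {s : Set V} : s ⊆ ρ.orbitSpan s := fun v hv =>
  Submodule.subset_span ⟨1, v, hv, by simp⟩

theorem orbitSpan_le_iff {s : Set V} {p : Submodule k V} :
    ρ.orbitSpan s ≤ p ↔ ∀ g, ∀ v ∈ s, ρ g v ∈ p := by
  simp only [orbitSpan, Submodule.span_le]
  exact ⟨fun h g v hv => h ⟨g, v, hv, rfl⟩, by rintro h _ ⟨g, v, hv, rfl⟩; exact h g v hv⟩

theorem orbitSpan_mono {s t : Set V} (h : s ⊆ t) : ρ.orbitSpan s ≤ ρ.orbitSpan t :=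
  orbitSpan_le_iff.2 fun g v hv => Submodule.subset_span ⟨g, v, h hv, rfl⟩

theorem apply_mem_orbitSpan {s : Set V} (g : G) {x : V} (hx : x ∈ ρ.orbitSpan s) :
    ρ g x ∈ ρ.orbitSpan s := by
  have : (ρ.orbitSpan s).map (ρ g) ≤ ρ.orbitSpan s := by
    rw [orbitSpan, Submodule.map_span_le]
    rintro _ ⟨h, v, hv, rfl⟩
    exact Submodule.subset_span ⟨g * h, v, hv, by simp⟩
  exact this ⟨x, hx, rfl⟩

theorem map_orbitSpan {σ : Representation k G W} {f : V →ₗ[k] W}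
    (hf : ∀ g v, f (ρ g v) = σ g (f v)) (s : Set V) :
    (ρ.orbitSpan s).map f = σ.orbitSpan (f '' s) := by
  rw [orbitSpan, orbitSpan, Submodule.map_span]
  congr 1
  ext w
  constructor
  · rintro ⟨_, ⟨g, v, hv, rfl⟩, rfl⟩
    exact ⟨g, f v, ⟨v, hv, rfl⟩, hf g v⟩
  · rintro ⟨g, _, ⟨v, hv, rfl⟩, rfl⟩
    exact ⟨ρ g v, ⟨g, v, hv, rfl⟩, hf g v⟩

theorem apply_out_mk {H : Subgroup G} {u : V} (hu : ∀ h ∈ H, ρ h u = u) (g : G) :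
    ρ (g : G ⧸ H).out u = ρ g u := by
  obtain ⟨h, hh⟩ := QuotientGroup.mk_out_eq_mul H g
  rw [hh, map_mul, Module.End.mul_apply, hu h h.2]

theorem apply_out_smul {H : Subgroup G} {u : V} (hu : ∀ h ∈ H, ρ h u = u) (g : G) (c : G ⧸ H) :
    ρ (g • c).out u = ρ g (ρ c.out u) := by
  conv_lhs => rw [← QuotientGroup.out_eq' c]
  exact (apply_out_mk hu (g * c.out)).trans (by rw [map_mul, Module.End.mul_apply])

end Representation

namespace Representation

variable {k G V : Type*} [Field k] [CharZero k] [Group G] [AddCommGroup V] [Module k V]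
  {ρ : Representation k G V}

/-- Averaging `u` over the finitely many cosets of `H ⊓ S` in `S`. -/
theorem exists_fixed_of_finiteIndex {S H : Subgroup G} [(H.subgroupOf S).FiniteIndex] {u : V}
    (hu : ∀ h ∈ H, ρ h u = u) :
    ∃ u' : V, (∀ a ∈ S, ρ a u' = u') ∧
      ∀ ψ : V →ₗ[k] k, (∀ g v, ψ (ρ g v) = ψ v) → ψ u' = ψ u := by
  classical
  let _ : Fintype (S ⧸ H.subgroupOf S) := Subgroup.fintypeQuotientOfFiniteIndex
  have hu' : ∀ h ∈ H.subgroupOf S, (ρ.comp S.subtype) h u = u := fun h hh =>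
    hu h (Subgroup.mem_subgroupOf.1 hh)
  refine ⟨(Fintype.card (S ⧸ H.subgroupOf S) : k)⁻¹ •
    ∑ z : S ⧸ H.subgroupOf S, ρ (z.out : G) u, fun a ha => ?_, fun ψ hψ => ?_⟩
  · rw [map_smul, map_sum]
    congr 1
    calc ∑ z : S ⧸ H.subgroupOf S, ρ a (ρ (z.out : G) u)
        = ∑ z : S ⧸ H.subgroupOf S, ρ (((⟨a, ha⟩ : S) • z).out : G) u :=
          Finset.sum_congr rfl fun z _ => (apply_out_smul hu' ⟨a, ha⟩ z).symm
      _ = ∑ z : S ⧸ H.subgroupOf S, ρ (z.out : G) u :=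
          Equiv.sum_comp (MulAction.toPerm (⟨a, ha⟩ : S))
            fun z : S ⧸ H.subgroupOf S => ρ (z.out : G) u
  · simp only [map_smul, map_sum, hψ, Finset.sum_const, Finset.card_univ, nsmul_eq_mul,
      smul_eq_mul]
    field_simp

end Representation

section PermutationModule

variable (k : Type*) [CommRing k] (G : Type*) [Group G] (X : Type*) [MulAction G X]

noncomputable def permRep : Representation k G (X →₀ k) where
  toFun g := lmapDomain k k (g • ·)
  map_one' := by ext; simp
  map_mul' g h := by ext; simp [mul_smul]

noncomputable def coeffSum : (X →₀ k) →ₗ[k] k :=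
  linearCombination k fun _ => 1

variable {k G X}

theorem permRep_apply (g : G) (v : X →₀ k) : permRep k G X g v = mapDomain (g • ·) v := rfl

@[simp]
theorem permRep_single (g : G) (x : X) (r : k) :
    permRep k G X g (single x r) = single (g • x) r :=
  mapDomain_single

@[simp]
theorem coeffSum_single (x : X) (r : k) : coeffSum k X (single x r) = r := by
  simp [coeffSum]

theorem coeffSum_mapDomain {Y : Type*} (f : X → Y) (v : X →₀ k) :
    coeffSum k Y (mapDomain f v) = coeffSum k X v := by
  simp [coeffSum, linearCombination_mapDomain, Function.comp_def]

@[simp]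
theorem coeffSum_permRep (g : G) (v : X →₀ k) : coeffSum k X (permRep k G X g v) = coeffSum k X v :=
  coeffSum_mapDomain _ v

theorem mapDomain_const_eq_single_coeffSum {Y : Type*} (y : Y) (v : X →₀ k) :
    mapDomain (fun _ => y) v = single y (coeffSum k X v) := by
  simp [mapDomain, coeffSum, linearCombination_apply, single_sum]

end PermutationModule

section EquivariantMaps

variable {k G V X Y : Type*} [CommRing k] [Group G] [AddCommGroup V] [Module k V]
  [MulAction G X] [MulAction G Y]

theorem linearCombination_permRep {ρ : Representation k G V} {F : X → V}
    (hF : ∀ g x, F (g • x) = ρ g (F x)) (g : G) (f : X →₀ k) :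
    linearCombination k F (permRep k G X g f) = ρ g (linearCombination k F f) := by
  refine LinearMap.congr_fun (Finsupp.lhom_ext (φ := linearCombination k F ∘ₗ permRep k G X g)
    (ψ := ρ g ∘ₗ linearCombination k F) fun x r => ?_) f
  simp [hF]

theorem mapDomain_permRep {π : X → Y} (hπ : ∀ (g : G) x, π (g • x) = g • π x) (g : G)
    (v : X →₀ k) : mapDomain π (permRep k G X g v) = permRep k G Y g (mapDomain π v) := by
  simp only [permRep_apply, ← mapDomain_comp]
  exact congrArg (mapDomain · v) (funext (hπ g))

namespace Representation

variable (ρ : Representation k G V)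

/-- Equivariant only if `u` is fixed by `O`; otherwise it depends on the choice of `c.out`. -/
noncomputable def cosetLift (O : Subgroup G) (u : V) : ((G ⧸ O) →₀ k) →ₗ[k] V :=
  linearCombination k fun c => ρ c.out u

noncomputable def sigmaLift {ι : Type*} (A : ι → Subgroup G) (u : ι → V) :
    ((Σ i, G ⧸ A i) →₀ k) →ₗ[k] V :=
  linearCombination k fun x => ρ x.2.out (u x.1)

variable {ρ}

@[simp]
theorem cosetLift_single (O : Subgroup G) (u : V) (c : G ⧸ O) (r : k) :
    ρ.cosetLift O u (single c r) = r • ρ c.out u :=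
  linearCombination_single k r c

theorem cosetLift_permRep {O : Subgroup G} {u : V} (hu : ∀ h ∈ O, ρ h u = u) (g : G)
    (f : (G ⧸ O) →₀ k) : ρ.cosetLift O u (permRep k G _ g f) = ρ g (ρ.cosetLift O u f) :=
  linearCombination_permRep (fun g c => apply_out_smul hu g c) g f

@[simp]
theorem sigmaLift_single {ι : Type*} (A : ι → Subgroup G) (u : ι → V) (x : Σ i, G ⧸ A i)
    (r : k) : ρ.sigmaLift A u (single x r) = r • ρ x.2.out (u x.1) :=
  linearCombination_single k r x

theorem sigmaLift_permRep {ι : Type*} {A : ι → Subgroup G} {u : ι → V}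
    (hu : ∀ i, ∀ h ∈ A i, ρ h (u i) = u i) (g : G) (f : (Σ i, G ⧸ A i) →₀ k) :
    ρ.sigmaLift A u (permRep k G _ g f) = ρ g (ρ.sigmaLift A u f) :=
  linearCombination_permRep (fun g x => apply_out_smul (hu x.1) g x.2) g f

end Representation

theorem orbitSpan_single_eq_top {P : Set X} (hP : ∀ x, ∃ g : G, ∃ p ∈ P, g • p = x) :
    (permRep k G X).orbitSpan ((fun p => single p 1) '' P) = ⊤ := by
  rw [eq_top_iff, ← Finsupp.basisSingleOne.span_eq, coe_basisSingleOne, Submodule.span_le]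
  rintro _ ⟨x, rfl⟩
  obtain ⟨g, p, hp, rfl⟩ := hP x
  exact Submodule.subset_span ⟨g, single p 1, ⟨p, hp, rfl⟩, (permRep_single g p 1).symm⟩

theorem range_eq_orbitSpan {ι : Type*} {B : ι → Subgroup G} {ρ : Representation k G V}
    (f : ((Σ j, G ⧸ B j) →₀ k) →ₗ[k] V) (hf : ∀ g v, f (permRep k G _ g v) = ρ g (f v)) :
    LinearMap.range f = ρ.orbitSpan (Set.range fun j => f (single ⟨j, (1 : G)⟩ 1)) := by
  have hP : ∀ x : Σ j, G ⧸ B j, ∃ g : G,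
      ∃ p ∈ Set.range fun j => (⟨j, (1 : G)⟩ : Σ j, G ⧸ B j), g • p = x :=
    fun ⟨j, c⟩ => ⟨c.out, _, ⟨j, rfl⟩, by simp [Sigma.smul_mk]⟩
  rw [LinearMap.range_eq_map, ← orbitSpan_single_eq_top (k := k) hP,
    Representation.map_orbitSpan hf, ← Set.range_comp, ← Set.range_comp]
  rfl

end EquivariantMaps

section OpenStabilizers

variable {k G X : Type*} [CommRing k] [Group G] [MulAction G X] [TopologicalSpace G]

theorem isOpen_stabilizer_sigma [IsTopologicalGroup G] {ι : Type*}
    {A : ι → Subgroup G} (hA : ∀ i, IsOpen (A i : Set G)) (x : Σ i, G ⧸ A i) :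
    IsOpen (MulAction.stabilizer G x : Set G) := by
  have : DiscreteTopology (G ⧸ A x.1) := QuotientGroup.discreteTopology (hA x.1)
  have hx : MulAction.stabilizer G x = MulAction.stabilizer G x.2 := by
    ext g
    obtain ⟨i, c⟩ := x
    simp [MulAction.mem_stabilizer_iff, Sigma.smul_mk]
  rw [hx]
  exact stabilizer_isOpen G x.2

theorem exists_isOpen_subgroup_fixing
    (hX : ∀ x : X, IsOpen (MulAction.stabilizer G x : Set G)) (v : X →₀ k) :
    ∃ H : Subgroup G, IsOpen (H : Set G) ∧ ∀ h ∈ H, permRep k G X h v = v := by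
  refine ⟨⨅ x ∈ v.support, MulAction.stabilizer G x, ?_, fun h hh => ?_⟩
  · simp only [Subgroup.coe_iInf]
    exact isOpen_biInter_finset fun x _ => hX x
  · rw [permRep_apply, mapDomain_congr (g := id), mapDomain_id]
    intro x hx
    exact Subgroup.mem_iInf.1 (Subgroup.mem_iInf.1 hh x) hx

theorem Subgroup.finiteIndex_subgroupOf_of_isCompact [IsTopologicalGroup G] {S H : Subgroup G}
    (hS : IsCompact (S : Set G)) (hH : IsOpen (H : Set G)) : (H.subgroupOf S).FiniteIndex :=
  have : CompactSpace S := isCompact_iff_compactSpace.1 hS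
  have := (H.subgroupOf S).quotient_finite_of_isOpen (Subgroup.subgroupOf_isOpen S H hH)
  Subgroup.finiteIndex_of_finite_quotient

end OpenStabilizers

section CompactGeneration

variable {k G X : Type*} [CommRing k] [Group G] [MulAction G X]

/-- `g ↦ δ_{g x₀} - δ_{x₀}` is a cocycle, so its values on generators of `G` span all its values. -/
theorem orbitSpan_eq_ker_coeffSum_of_closure_eq_top {x₀ : X} (hx₀ : ∀ x, ∃ g : G, g • x₀ = x)
    {T : Set G} (hT : Subgroup.closure (T ∪ MulAction.stabilizer G x₀) = ⊤) :
    (permRep k G X).orbitSpan ((fun a => single (a • x₀) 1 - single x₀ 1) '' T) =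
      LinearMap.ker (coeffSum k X) := by
  set ξ : G → X →₀ k := fun a => single (a • x₀) 1 - single x₀ 1
  set M := (permRep k G X).orbitSpan (ξ '' T)
  have hξ : ∀ g, ξ g ∈ M := by
    intro g
    induction (hT ▸ Subgroup.mem_top g : g ∈ Subgroup.closure _)
      using Subgroup.closure_induction with
    | mem a ha =>
      rcases ha with ha | ha
      · exact Representation.subset_orbitSpan ⟨a, ha, rfl⟩
      · simp [ξ, MulAction.mem_stabilizer_iff.1 ha]
    | one => simp [ξ]
    | mul g h _ _ hg hh =>
      have : ξ (g * h) = permRep k G X g (ξ h) + ξ g := by simp [ξ, mul_smul]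
      exact this ▸ M.add_mem (Representation.apply_mem_orbitSpan g hh) hg
    | inv g _ hg =>
      have : ξ g⁻¹ = -permRep k G X g⁻¹ (ξ g) := by simp [ξ]
      exact this ▸ M.neg_mem (Representation.apply_mem_orbitSpan g⁻¹ hg)
  refine le_antisymm (Representation.orbitSpan_le_iff.2 ?_) fun w hw => ?_
  · rintro g _ ⟨a, -, rfl⟩
    simp [ξ]
  · have : ∀ w : X →₀ k, w - coeffSum k X w • single x₀ 1 ∈ M := by
      intro w
      induction w using Finsupp.induction_linear with
      | zero => simp
      | add v w hv hw =>
        convert M.add_mem hv hw using 1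
        rw [map_add, add_smul]
        abel
      | single x r =>
        obtain ⟨g, rfl⟩ := hx₀ x
        convert M.smul_mem r (hξ g) using 1
        simp [ξ, smul_sub]
    simpa [LinearMap.mem_ker.1 hw] using this w

variable [TopologicalSpace G] [IsTopologicalGroup G]

open Pointwise in
theorem CompactlyGenerated'.exists_closure_union_eq_top (hG : CompactlyGenerated' G)
    {U : Subgroup G} (hU : IsOpen (U : Set G)) :
    ∃ T : Finset G, Subgroup.closure ((T : Set G) ∪ U) = ⊤ := by
  obtain ⟨K, hK, hKG⟩ := hG
  obtain ⟨T, hT⟩ := hK.elim_finite_subcover (fun a : G => a • (U : Set G)) (fun a => hU.smul a)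
    fun x _ => Set.mem_iUnion.2 ⟨x, 1, U.one_mem, mul_one x⟩
  refine ⟨T, eq_top_iff.2 (hKG ▸ Subgroup.closure_le _ |>.2 fun x hx => ?_)⟩
  obtain ⟨a, haT, u, hu, rfl⟩ : ∃ a ∈ T, ∃ u ∈ U, a * u = x := by
    simpa [Set.mem_smul_set] using hT hx
  exact mul_mem (Subgroup.subset_closure (Or.inl haT)) (Subgroup.subset_closure (Or.inr hu))

theorem exists_orbitSpan_eq_ker_coeffSum (hG : CompactlyGenerated' G) {x₀ : X}
    (hx₀ : ∀ x, ∃ g : G, g • x₀ = x) (hU : IsOpen (MulAction.stabilizer G x₀ : Set G)) :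
    ∃ s : Finset (X →₀ k), (permRep k G X).orbitSpan s = LinearMap.ker (coeffSum k X) := by
  classical
  obtain ⟨T, hT⟩ := hG.exists_closure_union_eq_top hU
  exact ⟨T.image fun a => single (a • x₀) 1 - single x₀ 1, by
    rw [Finset.coe_image]
    exact orbitSpan_eq_ker_coeffSum_of_closure_eq_top hx₀ hT⟩

end CompactGeneration

section FiniteGeneration

variable {k G : Type*} [CommRing k] [Nontrivial k] [Group G]

/-- Pushing forward along `G ⧸ O → G ⧸ H` kills the generators, hence the whole augmentation
ideal, hence every `δ_{gO} - δ_O`. -/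
theorem eq_top_of_orbitSpan_eq_ker_coeffSum {O H : Subgroup G} (hOH : O ≤ H)
    {s : Set ((G ⧸ O) →₀ k)} (hs : (permRep k G _).orbitSpan s = LinearMap.ker (coeffSum k _))
    (hsH : ∀ v ∈ s, ∀ x ∈ v.support, x.out ∈ H) : H = ⊤ := by
  set π := Subgroup.quotientMapOfLE hOH
  have hπ : ∀ (g : G) x, π (g • x) = g • π x := fun g x =>
    QuotientGroup.induction_on x fun a => rfl
  have hπ1 : ∀ v ∈ s, mapDomain π v = 0 := fun v hv => by
    have hv0 : coeffSum k _ v = 0 := LinearMap.mem_ker.1 (hs ▸ Representation.subset_orbitSpan hv)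
    rw [mapDomain_congr (g := fun _ => ((1 : G) : G ⧸ H)), mapDomain_const_eq_single_coeffSum, hv0,
      single_zero]
    intro x hx
    rw [← QuotientGroup.out_eq' x]
    simp only [π, Subgroup.quotientMapOfLE_apply_mk, QuotientGroup.eq]
    simpa using hsH v hv x hx
  have hker : LinearMap.ker (coeffSum k (G ⧸ O)) ≤ LinearMap.ker (lmapDomain k k π) :=
    hs ▸ Representation.orbitSpan_le_iff.2 fun g v hv => by
      simp [mapDomain_permRep hπ, hπ1 v hv]
  refine eq_top_iff.2 fun g _ => ?_
  have := hker (x := single (g : G ⧸ O) 1 - single ((1 : G) : G ⧸ O) 1) (by simp)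
  rw [LinearMap.mem_ker, map_sub, sub_eq_zero, lmapDomain_apply, lmapDomain_apply, mapDomain_single,
    mapDomain_single, single_left_inj one_ne_zero] at this
  simp only [π, Subgroup.quotientMapOfLE_apply_mk, QuotientGroup.eq] at this
  simpa using this

theorem compactlyGenerated_of_orbitSpan_eq_ker_coeffSum [TopologicalSpace G] {O : Subgroup G}
    (hO : IsCompact (O : Set G)) {s : Finset ((G ⧸ O) →₀ k)}
    (hs : (permRep k G _).orbitSpan (s : Set ((G ⧸ O) →₀ k)) = LinearMap.ker (coeffSum k _)) :
    CompactlyGenerated' G := by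
  classical
  set T : Finset G := s.biUnion fun v => v.support.image Quotient.out
  refine ⟨O ∪ T, hO.union T.finite_toSet.isCompact, eq_top_of_orbitSpan_eq_ker_coeffSum
    (fun o ho => Subgroup.subset_closure (Or.inl ho)) hs fun v hv x hx => ?_⟩
  exact Subgroup.subset_closure
    (Or.inr (Finset.mem_biUnion.2 ⟨v, hv, Finset.mem_image_of_mem _ hx⟩))

end FiniteGeneration

section Resolutions

variable {k G X : Type*} [CommRing k] [Group G] [MulAction G X] [TopologicalSpace G]
  [IsTopologicalGroup G]

theorem exists_sigma_range_eq_orbitSpan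
    (hX : ∀ x : X, IsOpen (MulAction.stabilizer G x : Set G)) {O : Subgroup G}
    (hOo : IsOpen (O : Set G)) (hOc : IsCompact (O : Set G)) (s : Finset (X →₀ k)) :
    ∃ (m : ℕ) (B : Fin m → Subgroup G), (∀ j, IsOpen (B j : Set G) ∧ IsCompact (B j : Set G)) ∧
      ∃ d : ((Σ j, G ⧸ B j) →₀ k) →ₗ[k] (X →₀ k),
        (∀ g f, d (permRep k G _ g f) = permRep k G X g (d f)) ∧
        LinearMap.range d = (permRep k G X).orbitSpan s := by
  set v : Fin s.card → X →₀ k := fun j => s.equivFin.symm j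
  choose H hHo hHv using fun j => exists_isOpen_subgroup_fixing (k := k) hX (v j)
  set B := fun j => O ⊓ H j
  have hBo : ∀ j, IsOpen (B j : Set G) := fun j => hOo.inter (hHo j)
  have hBv : ∀ j, ∀ h ∈ B j, permRep k G X h (v j) = v j := fun j h hh =>
    hHv j h (Subgroup.mem_inf.1 hh).2
  refine ⟨s.card, B, fun j => ⟨hBo j, hOc.of_isClosed_subset ((B j).isClosed_of_isOpen (hBo j))
    inf_le_left⟩, (permRep k G X).sigmaLift B v, Representation.sigmaLift_permRep hBv, ?_⟩
  rw [range_eq_orbitSpan _ (Representation.sigmaLift_permRep hBv)]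
  congr 1
  ext w
  simp only [Representation.sigmaLift_single, one_smul, Representation.apply_out_mk (hBv _),
    map_one, Module.End.one_apply, Set.mem_range, Finset.mem_coe]
  exact ⟨by rintro ⟨j, rfl⟩; exact (s.equivFin.symm j).2,
    fun hw => ⟨s.equivFin ⟨w, hw⟩, by simp [v]⟩⟩

end Resolutions

theorem isTypeFPOne_of_compactlyGenerated {G : Type*} [Group G] [TopologicalSpace G]
    [IsTopologicalGroup G] (hG : CompactlyGenerated' G) {O : Subgroup G}
    (hOo : IsOpen (O : Set G)) (hOc : IsCompact (O : Set G)) : IsTypeFPOne G := by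
  set A : Fin 1 → Subgroup G := fun _ => O
  have hX := isOpen_stabilizer_sigma (A := A) fun _ => hOo
  obtain ⟨s, hs⟩ := exists_orbitSpan_eq_ker_coeffSum (k := ℚ) hG (x₀ := ⟨0, (1 : G)⟩)
    (fun ⟨i, c⟩ => ⟨c.out, by simp [Fin.fin_one_eq_zero i, Sigma.smul_mk]⟩) (hX _)
  obtain ⟨m, B, hB, d, hd, hrange⟩ := exists_sigma_range_eq_orbitSpan hX hOo hOc s
  exact ⟨1, m, A, B, fun _ => ⟨hOo, hOc⟩, hB, d, coeffSum ℚ _, hd, coeffSum_permRep,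
    fun r => ⟨single ⟨0, (1 : G)⟩ r, coeffSum_single _ r⟩, hrange.trans hs⟩

/-- Write `v = (v - τ (σ v)) + τ (σ v)`: the first summand lies in the span of the translates of
`x₀ - τ (σ x₀)` because `id - τ ∘ σ` is equivariant, the second in `τ (ker εW)`. -/
theorem Representation.orbitSpan_eq_ker_of_retract {k G V W U : Type*} [CommRing k] [Group G]
    [AddCommGroup V] [Module k V] [AddCommGroup W] [Module k W] [AddCommGroup U] [Module k U]
    {ρ : Representation k G V} {ϱ : Representation k G W} {εV : V →ₗ[k] U} {εW : W →ₗ[k] U}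
    {σ : V →ₗ[k] W} {τ : W →ₗ[k] V} (hσ : ∀ g v, σ (ρ g v) = ϱ g (σ v))
    (hτ : ∀ g w, τ (ϱ g w) = ρ g (τ w)) (hεσ : ∀ v, εW (σ v) = εV v)
    (hετ : ∀ w, εV (τ w) = εW w) (hεV : ∀ g v, εV (ρ g v) = εV v) {x₀ : V}
    (hx₀ : ρ.orbitSpan {x₀} = ⊤) {s : Set W} (hs : ϱ.orbitSpan s = LinearMap.ker εW) :
    ρ.orbitSpan (insert (x₀ - τ (σ x₀)) (τ '' s)) = LinearMap.ker εV := by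
  set M := ρ.orbitSpan (insert (x₀ - τ (σ x₀)) (τ '' s))
  set π : V →ₗ[k] V := LinearMap.id - τ ∘ₗ σ
  have hπ : ∀ g v, π (ρ g v) = ρ g (π v) := by simp [π, hσ, hτ]
  refine le_antisymm (orbitSpan_le_iff.2 ?_) fun v hv => ?_
  · rintro g _ (rfl | ⟨w, hw, rfl⟩) <;> rw [LinearMap.mem_ker, hεV]
    · simp [hετ, hεσ]
    · rw [hετ]
      exact LinearMap.mem_ker.1 (hs ▸ subset_orbitSpan hw)
  · have h1 : π v ∈ M := by
      have : π v ∈ (ρ.orbitSpan {x₀}).map π := ⟨v, hx₀ ▸ Submodule.mem_top, rfl⟩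
      rw [map_orbitSpan hπ, Set.image_singleton] at this
      exact orbitSpan_mono (Set.singleton_subset_iff.2 (Set.mem_insert _ _)) this
    have h2 : τ (σ v) ∈ M := by
      have hσv : σ v ∈ ϱ.orbitSpan s := hs ▸ by simpa [hεσ] using hv
      have : τ (σ v) ∈ (ϱ.orbitSpan s).map τ := ⟨σ v, hσv, rfl⟩
      rw [map_orbitSpan hτ] at this
      exact orbitSpan_mono (Set.subset_insert _ _) this
    simpa [π] using M.add_mem h1 h2

section Averaging

variable {k G : Type*} [Field k] [CharZero k] [Group G] [TopologicalSpace G] [IsTopologicalGroup G]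

theorem exists_equivariant_coeffSum_lift {ι : Type*} {A : ι → Subgroup G}
    (hA : ∀ i, IsCompact (A i : Set G)) {O : Subgroup G} (hO : IsOpen (O : Set G))
    (e : ((Σ i, G ⧸ A i) →₀ k) →ₗ[k] k) (he : ∀ g f, e (permRep k G _ g f) = e f) :
    ∃ τ : ((Σ i, G ⧸ A i) →₀ k) →ₗ[k] ((G ⧸ O) →₀ k),
      (∀ g f, τ (permRep k G _ g f) = permRep k G _ g (τ f)) ∧ ∀ f, coeffSum k _ (τ f) = e f := by
  have hδ : ∀ h ∈ O, permRep k G (G ⧸ O) h (single (1 : G) 1) = single ((1 : G) : G ⧸ O) 1 := by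
    intro h hh
    rw [← MulAction.stabilizer_quotient O] at hh
    rw [permRep_single, MulAction.mem_stabilizer_iff.1 hh]
  choose q hq hq1 using fun i =>
    have := Subgroup.finiteIndex_subgroupOf_of_isCompact (hA i) hO
    Representation.exists_fixed_of_finiteIndex (S := A i) hδ
  refine ⟨(permRep k G _).sigmaLift A (fun i => e (single ⟨i, (1 : G)⟩ 1) • q i),
    Representation.sigmaLift_permRep fun i h hh => by rw [map_smul, hq i h hh], fun f => ?_⟩
  refine LinearMap.congr_fun (Finsupp.lhom_ext (φ := coeffSum k _ ∘ₗ _) (ψ := e)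
    fun ⟨i, c⟩ r => ?_) f
  have hc : single (⟨i, c⟩ : Σ i, G ⧸ A i) r =
      permRep k G _ c.out (r • single (⟨i, (1 : G)⟩ : Σ i, G ⧸ A i) 1) := by
    simp [Sigma.smul_mk]
  rw [LinearMap.comp_apply, Representation.sigmaLift_single, hc, he, map_smul e]
  simp [hq1 i _ coeffSum_permRep]

theorem exists_equivariant_lift_of_surjective {X : Type*} [MulAction G X]
    (hX : ∀ x : X, IsOpen (MulAction.stabilizer G x : Set G)) {O : Subgroup G}
    (hO : IsCompact (O : Set G)) (e : (X →₀ k) →ₗ[k] k) (he : ∀ g f, e (permRep k G X g f) = e f)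
    (he1 : Function.Surjective e) :
    ∃ σ : ((G ⧸ O) →₀ k) →ₗ[k] (X →₀ k),
      (∀ g v, σ (permRep k G _ g v) = permRep k G X g (σ v)) ∧ ∀ v, e (σ v) = coeffSum k _ v := by
  obtain ⟨p, hp⟩ := he1 1
  obtain ⟨H, hHo, hHp⟩ := exists_isOpen_subgroup_fixing hX p
  have := Subgroup.finiteIndex_subgroupOf_of_isCompact hO hHo
  obtain ⟨p₀, hp₀, hep₀⟩ := Representation.exists_fixed_of_finiteIndex (S := O) hHp
  refine ⟨(permRep k G X).cosetLift O p₀, Representation.cosetLift_permRep hp₀, fun v =>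
    LinearMap.congr_fun (Finsupp.lhom_ext (φ := e ∘ₗ _) (ψ := coeffSum k _) fun c r => ?_) v⟩
  simp [he, hep₀ e he, hp]

end Averaging

theorem exists_orbitSpan_eq_ker_of_isTypeFPOne {G : Type*} [Group G] [TopologicalSpace G]
    [IsTopologicalGroup G] (hG : IsTypeFPOne G) {O : Subgroup G} (hOo : IsOpen (O : Set G))
    (hOc : IsCompact (O : Set G)) :
    ∃ s : Finset ((G ⧸ O) →₀ ℚ),
      (permRep ℚ G _).orbitSpan s = LinearMap.ker (coeffSum ℚ (G ⧸ O)) := by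
  classical
  obtain ⟨n, m, A, B, hA, -, d, e, hd, he, he1, hde⟩ := hG
  obtain ⟨τ, hτ, hτe⟩ := exists_equivariant_coeffSum_lift (fun i => (hA i).2) hOo e he
  obtain ⟨σ, hσ, hσe⟩ := exists_equivariant_lift_of_surjective
    (isOpen_stabilizer_sigma fun i => (hA i).1) hOc e he he1
  set x₀ : (G ⧸ O) →₀ ℚ := single (1 : G) 1
  have hx₀ : (permRep ℚ G _).orbitSpan {x₀} = ⊤ := by
    simpa using orbitSpan_single_eq_top (k := ℚ) (P := {((1 : G) : G ⧸ O)})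
      fun c => ⟨c.out, _, rfl, by simp⟩
  refine ⟨insert (x₀ - τ (σ x₀)) (Finset.univ.image fun j => τ (d (single ⟨j, (1 : G)⟩ 1))), ?_⟩
  rw [Finset.coe_insert, Finset.coe_image, Finset.coe_univ, Set.image_univ, Set.range_comp']
  exact Representation.orbitSpan_eq_ker_of_retract hσ hτ hσe hτe coeffSum_permRep hx₀
    ((range_eq_orbitSpan (ρ := permRep ℚ G _) d hd).symm.trans hde)

theorem augKerFG_iff {G : Type*} [Group G] [TopologicalSpace G] {O : Subgroup G} :
    AugKerFG G O ↔ ∃ s : Finset ((G ⧸ O) →₀ ℚ),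
      (permRep ℚ G _).orbitSpan s = LinearMap.ker (coeffSum ℚ (G ⧸ O)) :=
  ⟨fun ⟨s, _, hs⟩ => ⟨s, hs⟩,
    fun ⟨s, hs⟩ => ⟨s, fun _ hv => hs ▸ Representation.subset_orbitSpan hv, hs⟩⟩

/-- A t.d.l.c. group `G` is compactly generated iff for every
(equivalently, some) compact open subgroup `O` the augmentation ideal
`ker(ℚ[G/O] → ℚ)` is a finitely generated discrete `ℚ[G]`-module; equivalently,
iff `G` is of type `FP₁` over `ℚ`. -/
theorem compactly_generated_iff_FP1 [IsTopologicalGroup G]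
    [TotallyDisconnectedSpace G] [LocallyCompactSpace G] :
    (CompactlyGenerated' G ↔
      ∀ O : Subgroup G, IsOpen (O : Set G) → IsCompact (O : Set G) → AugKerFG G O) ∧
    (CompactlyGenerated' G ↔
      ∃ O : Subgroup G, IsOpen (O : Set G) ∧ IsCompact (O : Set G) ∧ AugKerFG G O) ∧
    (CompactlyGenerated' G ↔ IsTypeFPOne G) := by
  obtain ⟨O₀, hO₀o, hO₀c⟩ := exists_isOpen_isCompact_subgroup G
  have cg_fg : CompactlyGenerated' G → ∀ O : Subgroup G, IsOpen (O : Set G) → AugKerFG G O :=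
    fun hG O hO => augKerFG_iff.2 <| exists_orbitSpan_eq_ker_coeffSum hG
      (x₀ := ((1 : G) : G ⧸ O)) (fun x => ⟨x.out, by simp⟩)
      (by rwa [MulAction.stabilizer_quotient])
  have fg_cg : ∀ O : Subgroup G, IsCompact (O : Set G) → AugKerFG G O → CompactlyGenerated' G :=
    fun O hO hfg => (augKerFG_iff.1 hfg).elim fun _ hs =>
      compactlyGenerated_of_orbitSpan_eq_ker_coeffSum hO hs
  refine ⟨⟨fun hG O hO _ => cg_fg hG O hO, fun h => fg_cg O₀ hO₀c (h O₀ hO₀o hO₀c)⟩,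
    ⟨fun hG => ⟨O₀, hO₀o, hO₀c, cg_fg hG O₀ hO₀o⟩, fun ⟨O, _, hOc, hfg⟩ => fg_cg O hOc hfg⟩,
    ⟨fun hG => isTypeFPOne_of_compactlyGenerated hG hO₀o hO₀c, fun h =>
      fg_cg O₀ hO₀c (augKerFG_iff.2 (exists_orbitSpan_eq_ker_of_isTypeFPOne h hO₀o hO₀c))⟩⟩
end
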